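/- arXiv:1502.07943 — 3 statements merged into one kernel-verified Lean document; each statement's English description precedes it below -/
import Mathlib

section
/- For every n ≥ 2, every budget B that is a multiple of n, every choice of limits ν_1 < ν_2 ≤ … ≤ ν_n, and every non-increasing function β : ℕ → ℝ with β(t) > 0 for all t and lim_{t→∞} β(t) = 0, there exist loss sequences (namely ℓ_{1,t} = ν_1 + β(t) and ℓ_{i,t} = ν_i − β(t) for i ≥ 2) such that: (a) lim_{τ→∞} ℓ_{i,τ} = ν_i for each i; (b) |ℓ_{i,t} − ν_i| = β(t) for all i and t, so β is the common pointwise-smallest envelope γ̄; and (c) if B < n · max_{i=2,…,n} β^{-1}((ν_i − ν_1)/2), then ℓ_{1,B/n} ≥ min_{i∈{2,…,n}} ℓ_{i,B/n}, i.e., the uniform allocation strategy does not return the best arm. -/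
open Filter Topology

/-- **Necessity for the uniform allocation strategy (Theorem 3).**
For every `n ≥ 2`, every positive budget `B` that is a multiple of `n`, every choice of
limits `ν ⟨0⟩ < ν ⟨1⟩ ≤ … ≤ ν ⟨n-1⟩` (arm `0` of `Fin n` is arm 1 of the paper), and every
non-increasing positive `β : ℕ → ℝ` tending to `0`, there exist loss sequences — namely
`ℓ_{1,t} = ν₁ + β(t)` and `ℓ_{i,t} = ν_i − β(t)` for `i ≥ 2` — such that:
(a) `ℓ_{i,τ} → ν_i` for each `i`; (b) `|ℓ_{i,t} − ν_i| = β(t)` for all `i` and `t ≥ 1`,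
so `β` is the common pointwise-smallest envelope; and (c) if
`B < n · max_{i≥2} β⁻¹((ν_i − ν_1)/2)` (with `β⁻¹(α) = min {t ≥ 1 : β t ≤ α}`) then
`ℓ_{1,B/n} ≥ min_{i≥2} ℓ_{i,B/n}`, i.e. uniform allocation does not return the best arm. -/
theorem uniform_allocation_necessity
    (n B : ℕ) (hn : 2 ≤ n) (hBpos : 0 < B) (hdvd : n ∣ B)
    (ν : Fin n → ℝ)
    (hmono : Monotone ν)
    (hbest : ν ⟨0, by omega⟩ < ν ⟨1, by omega⟩)
    (β : ℕ → ℝ) (hβanti : Antitone β) (hβpos : ∀ t, 0 < β t)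
    (hβlim : Tendsto β atTop (𝓝 0)) :
    ∃ ℓ : Fin n → ℕ → ℝ,
      (ℓ = fun i t => if i = ⟨0, by omega⟩ then ν ⟨0, by omega⟩ + β t else ν i - β t) ∧
      (∀ i, Tendsto (fun t => ℓ i t) atTop (𝓝 (ν i))) ∧
      (∀ i, ∀ t, 1 ≤ t → |ℓ i t - ν i| = β t) ∧
      (B < n * (Finset.univ.filter (fun i : Fin n => i ≠ ⟨0, by omega⟩)).sup
            (fun i => sInf {t : ℕ | 1 ≤ t ∧ β t ≤ (ν i - ν ⟨0, by omega⟩) / 2}) →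
        (Finset.univ.filter (fun i : Fin n => i ≠ ⟨0, by omega⟩)).inf'
            (⟨⟨1, by omega⟩, by simp⟩) (fun i => ℓ i (B / n)) ≤ ℓ ⟨0, by omega⟩ (B / n)) := by
  refine ⟨_, rfl, ?_, ?_, ?_⟩
  · intro i
    by_cases h : i = ⟨0, by omega⟩
    · simp only [h, if_pos]
      simpa using tendsto_const_nhds.add hβlim
    · simp only [if_neg h]
      simpa using tendsto_const_nhds.sub hβlim
  · intro i t ht
    by_cases h : i = ⟨0, by omega⟩
    · simp [h, abs_of_pos (hβpos t)]
    · simp [if_neg h, abs_of_pos (hβpos t)]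
  · intro hB
    set T := B / n with hT
    have hnpos : 0 < n := by omega
    obtain ⟨k, hk⟩ := hdvd
    have hTk : T = k := by rw [hT, hk, Nat.mul_div_cancel_left _ hnpos]
    have hkpos : 0 < k := by
      rcases Nat.eq_zero_or_pos k with h | h
      · subst h; simp at hk; omega
      · exact h
    have hT1 : 1 ≤ T := by omega
    -- from hB, get an index i with T < sInf ...
    have hB' : T < (Finset.univ.filter (fun i : Fin n => i ≠ ⟨0, by omega⟩)).sup
            (fun i => sInf {t : ℕ | 1 ≤ t ∧ β t ≤ (ν i - ν ⟨0, by omega⟩) / 2}) := by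
      by_contra hcon
      push_neg at hcon
      have : n * (Finset.univ.filter (fun i : Fin n => i ≠ ⟨0, by omega⟩)).sup
            (fun i => sInf {t : ℕ | 1 ≤ t ∧ β t ≤ (ν i - ν ⟨0, by omega⟩) / 2}) ≤ n * T :=
        Nat.mul_le_mul_left n hcon
      have hBT : n * T = B := by rw [hTk, hk]
      omega
    rw [Finset.lt_sup_iff] at hB'
    obtain ⟨i, hi, hTi⟩ := hB'
    have hine : i ≠ ⟨0, by omega⟩ := by simpa using hi
    -- T is not in the set
    have hnotmem : T ∉ {t : ℕ | 1 ≤ t ∧ β t ≤ (ν i - ν ⟨0, by omega⟩) / 2} :=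
      Nat.notMem_of_lt_sInf hTi
    have hβT : (ν i - ν ⟨0, by omega⟩) / 2 < β T := by
      by_contra hc
      push_neg at hc
      exact hnotmem ⟨hT1, hc⟩
    -- ν ⟨1⟩ ≤ ν i
    have h1i : ν ⟨1, by omega⟩ ≤ ν i := by
      apply hmono
      have : (1 : ℕ) ≤ i.val := by
        by_contra hc
        push_neg at hc
        exact hine (Fin.ext (show i.val = 0 by omega))
      exact this
    have key : ν ⟨1, by omega⟩ - β T ≤ ν ⟨0, by omega⟩ + β T := by
      have := hβT
      nlinarith [hβpos T]
    calc (Finset.univ.filter (fun i : Fin n => i ≠ ⟨0, by omega⟩)).inf'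
            (⟨⟨1, by omega⟩, by simp⟩) (fun i => if i = ⟨0, by omega⟩ then ν ⟨0, by omega⟩ + β T else ν i - β T)
        ≤ (if (⟨1, by omega⟩ : Fin n) = ⟨0, by omega⟩ then ν ⟨0, by omega⟩ + β T else ν ⟨1, by omega⟩ - β T) := by
          apply Finset.inf'_le
          simp
      _ ≤ ν ⟨0, by omega⟩ + β T := by
          rw [if_neg (by simp)]
          exact key
      _ = (if (⟨0, by omega⟩ : Fin n) = ⟨0, by omega⟩ then ν ⟨0, by omega⟩ + β T else ν ⟨0, by omega⟩ - β T) := by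
          rw [if_pos rfl]
end

section
/- Let n ≥ 2 and let b_2 ≥ b_3 ≥ … ≥ b_n ≥ 0 be a non-increasing sequence of nonnegative real numbers. Then ∑_{i=2}^{n} b_i ≤ log₂(2n) · max_{i=2,…,n} i·b_i. -/
/-!
Since `i * b i ≤ M` for the maximum `M`, each `b i` is at most `M / i`, so the sum is at most
`M` times the harmonic tail `∑_{i=2}^n 1/i ≤ log n ≤ log₂ (2n)`.
-/

open Finset Real

lemma sum_Icc_two_inv_le_log (n : ℕ) : ∑ i ∈ Icc 2 n, (i : ℝ)⁻¹ ≤ log n := by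
  rcases Nat.eq_zero_or_pos n with rfl | hn
  · simp
  have h := harmonic_le_one_add_log n
  rw [harmonic_eq_sum_Icc] at h
  push_cast at h
  rw [← insert_Icc_add_one_left_eq_Icc hn, sum_insert (by simp)] at h
  norm_num at h
  linarith

lemma log_le_logb_two_mul {x : ℝ} (hx : 1 ≤ x) : log x ≤ logb 2 (2 * x) := by
  have hlog : log x ≤ logb 2 x :=
    le_div_self (log_nonneg hx) (log_pos one_lt_two) (log_two_lt_d9.le.trans (by norm_num))
  rw [logb_mul two_ne_zero (by positivity), logb_self_eq_one one_lt_two]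
  linarith

lemma sum_le_sup'_mul_sum_inv {s : Finset ℕ} (hs : s.Nonempty) (h0 : 0 ∉ s) (b : ℕ → ℝ) :
    ∑ i ∈ s, b i ≤ s.sup' hs (fun i => (i : ℝ) * b i) * ∑ i ∈ s, (i : ℝ)⁻¹ := by
  rw [mul_sum]
  refine sum_le_sum fun i hi => ?_
  have hi0 : (i : ℝ) ≠ 0 := Nat.cast_ne_zero.2 (ne_of_mem_of_not_mem hi h0)
  calc b i = (i * b i) * (i : ℝ)⁻¹ := by field_simp
    _ ≤ _ := by gcongr; exact le_sup' (fun i : ℕ => (i : ℝ) * b i) hi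

theorem sum_le_log_mul_max_general
    (n : ℕ) (hn : 2 ≤ n) (b : ℕ → ℝ)
    (hnonneg : ∀ i, 2 ≤ i → i ≤ n → 0 ≤ b i) :
    ∑ i ∈ Finset.Icc 2 n, b i ≤
      Real.logb 2 (2 * n) *
        (Finset.Icc 2 n).sup' (Finset.nonempty_Icc.mpr hn) (fun i => (i : ℝ) * b i) := by
  set M := (Icc 2 n).sup' (nonempty_Icc.mpr hn) (fun i : ℕ => (i : ℝ) * b i)
  have hM : 0 ≤ M := (mul_nonneg (Nat.cast_nonneg 2) (hnonneg 2 le_rfl hn)).trans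
    (le_sup' (fun i : ℕ => (i : ℝ) * b i) (left_mem_Icc.mpr hn))
  calc ∑ i ∈ Icc 2 n, b i ≤ M * ∑ i ∈ Icc 2 n, (i : ℝ)⁻¹ :=
        sum_le_sup'_mul_sum_inv _ (by simp) b
    _ ≤ M * log n := by gcongr; exact sum_Icc_two_inv_le_log n
    _ ≤ M * logb 2 (2 * n) := by
        gcongr; exact log_le_logb_two_mul (by exact_mod_cast hn.trans' one_le_two)
    _ = logb 2 (2 * n) * M := mul_comm _ _

/-- **Sum-form is bounded by `log₂(2n)` times the max-form (Audibert–Bubeck–Munos).**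
For `n ≥ 2` and a non-increasing sequence `b_2 ≥ b_3 ≥ … ≥ b_n ≥ 0` of nonnegative reals,
`∑_{i=2}^n b_i ≤ log₂(2n) · max_{i=2,…,n} i·b_i`. -/
theorem sum_le_log_mul_max
    (n : ℕ) (hn : 2 ≤ n) (b : ℕ → ℝ)
    (hanti : ∀ i j, 2 ≤ i → i ≤ j → j ≤ n → b j ≤ b i)
    (hnonneg : ∀ i, 2 ≤ i → i ≤ n → 0 ≤ b i) :
    ∑ i ∈ Finset.Icc 2 n, b i ≤
      Real.logb 2 (2 * n) *
        (Finset.Icc 2 n).sup' (Finset.nonempty_Icc.mpr hn) (fun i => (i : ℝ) * b i) :=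
  sum_le_log_mul_max_general n hn b hnonneg
end

section
/- Suppose there are n ≥ 2 arms with loss sequences ℓ_{i,t} whose limits ν_i exist and satisfy ν_1 < ν_2 ≤ … ≤ ν_n, and let γ̄ be a common envelope for all arms. Let S ⊆ {1,…,n} with 1 ∈ S and |S| = m ≥ 2, let R ≥ 1, and let S' ⊆ S be any subset of size ⌊m/2⌋ consisting of arms with the smallest values of ℓ_{i,R} among i ∈ S (ties broken arbitrarily). If 1 ∉ S', then ν_{⌊m/2⌋+1} − ν_1 ≤ 2·γ̄(R). -/
open Filter Topology

/-- **Per-round lemma for the Successive Halving sufficiency theorem.**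
With `n ≥ 2` arms (indexed by `Fin n`, arm `0` being arm 1 of the paper), limits
`ν ⟨0⟩ < ν ⟨1⟩ ≤ … ≤ ν ⟨n-1⟩`, and a common non-increasing envelope `γ`: let `S` contain
arm `0` with `|S| = m ≥ 2`, let `R ≥ 1`, and let `S' ⊆ S` be a subset of size `⌊m/2⌋`
consisting of arms with the smallest values of `ℓ_{·,R}` on `S` (ties arbitrary).
If the best arm is eliminated (`0 ∉ S'`), then `ν_{⌊m/2⌋+1} − ν_1 ≤ 2·γ(R)`
(the paper's arm `⌊m/2⌋+1` is index `⌊m/2⌋` in `Fin n`). -/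
theorem halving_round_elimination
    (n : ℕ) (hn : 2 ≤ n)
    (ℓ : Fin n → ℕ → ℝ) (ν : Fin n → ℝ)
    (hlim : ∀ i, Tendsto (fun t => ℓ i t) atTop (𝓝 (ν i)))
    (hmono : Monotone ν)
    (hbest : ν ⟨0, by omega⟩ < ν ⟨1, by omega⟩)
    (γ : ℕ → ℝ) (hγanti : Antitone γ)
    (henv : ∀ i, ∀ t, 1 ≤ t → |ℓ i t - ν i| ≤ γ t)
    (S S' : Finset (Fin n))
    (hmem : (⟨0, by omega⟩ : Fin n) ∈ S) (hcard : 2 ≤ S.card)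
    (hsub : S' ⊆ S) (hcard' : S'.card = S.card / 2)
    (R : ℕ) (hR : 1 ≤ R)
    (hsel : ∀ i ∈ S', ∀ j ∈ S, j ∉ S' → ℓ i R ≤ ℓ j R)
    (hout : (⟨0, by omega⟩ : Fin n) ∉ S') :
    ν ⟨S.card / 2, by
        have h := Finset.card_le_univ S
        simp only [Finset.card_univ, Fintype.card_fin] at h
        omega⟩ - ν ⟨0, by omega⟩ ≤ 2 * γ R := by
  have hkn : S.card / 2 < n := by
    have h := Finset.card_le_univ S
    simp only [Finset.card_univ, Fintype.card_fin] at h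
    omega
  set k := S.card / 2 with hk
  -- find i ∈ S' with k ≤ i.val
  have hex : ∃ i ∈ S', k ≤ i.val := by
    by_contra h
    push_neg at h
    have hsub2 : S'.image Fin.val ⊆ Finset.Ico 1 k := by
      intro x hx
      simp only [Finset.mem_image] at hx
      obtain ⟨i, hi, rfl⟩ := hx
      have h1 : 1 ≤ i.val := by
        rcases Nat.eq_zero_or_pos i.val with h0 | h0
        · exfalso; apply hout
          have : i = ⟨0, by omega⟩ := Fin.ext h0
          rwa [this] at hi
        · omega
      simp only [Finset.mem_Ico]
      exact ⟨h1, h i hi⟩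
    have hc := Finset.card_le_card hsub2
    rw [Finset.card_image_of_injective _ Fin.val_injective, Nat.card_Ico] at hc
    omega
  obtain ⟨i, hiS', hik⟩ := hex
  have h1 : ν ⟨k, hkn⟩ ≤ ν i := hmono hik
  have h2 := henv i R hR
  have h3 := henv ⟨0, by omega⟩ R hR
  have h4 := hsel i hiS' ⟨0, by omega⟩ hmem hout
  rw [abs_sub_le_iff] at h2 h3
  linarith [h2.2, h3.1]
end
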